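/- Let (Φ_t)_{t≥0} be a continuous one-parameter semigroup on the right half-plane Π with Denjoy–Wolff point at ∞, generated by −φ, where φ has no zeros in Π and admits the representation φ(w) = β + γ/(w+1) + ϱ₁(w) with β, γ ∈ ℂ, β ≠ 0, and w·ϱ₁(w) → 0 as |w| → ∞, w ∈ Π. Let σ be the holomorphic function with σ'(w) = 1/φ(w), σ(1) = 0. Then for every w ∈ Π, lim_{t→∞} t·( Φ_t(w) − Φ_t(1) − β·σ(w) ) = γ·σ(w)/β. -/

import Mathlib

open Complex Filter Topology Set MeasureTheory

noncomputable section

/-- The right half-plane in the complex plane. -/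
def rightHalfPlane : Set ℂ := {w : ℂ | 0 < w.re}

/-- A continuous one-parameter semigroup `Φ` on the right half-plane generated by `-φ`,
where `Re φ ≥ 0`: each `Φ t` is a holomorphic self-map of the half-plane, `Φ 0 = id`,
`Φ (t+s) = Φ t ∘ Φ s`, and for each `w` the trajectory `t ↦ Φ t w` solves
`∂Φ_t(w)/∂t = φ(Φ_t(w))`. -/
structure IsContinuousSemigroupOnHalfPlane (Φ : ℝ → ℂ → ℂ) (φ : ℂ → ℂ) : Prop where
  mapsTo : ∀ t : ℝ, 0 ≤ t → Set.MapsTo (Φ t) rightHalfPlane rightHalfPlane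
  holomorphic : ∀ t : ℝ, 0 ≤ t → DifferentiableOn ℂ (Φ t) rightHalfPlane
  init : ∀ w ∈ rightHalfPlane, Φ 0 w = w
  semigroup : ∀ t s : ℝ, 0 ≤ t → 0 ≤ s → ∀ w ∈ rightHalfPlane, Φ (t + s) w = Φ t (Φ s w)
  gen_holomorphic : DifferentiableOn ℂ φ rightHalfPlane
  gen_re_nonneg : ∀ w ∈ rightHalfPlane, 0 ≤ (φ w).re
  ode : ∀ w ∈ rightHalfPlane, ∀ t : ℝ, 0 ≤ t →
    HasDerivWithinAt (fun s : ℝ => Φ s w) (φ (Φ t w)) (Set.Ici (0 : ℝ)) t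

/-- The semigroup has Denjoy–Wolff point at `∞`. -/
def HasDWPointInfty (Φ : ℝ → ℂ → ℂ) : Prop :=
  ∀ w ∈ rightHalfPlane, Tendsto (fun t : ℝ => ‖Φ t w‖) atTop atTop

/-- The filter of neighbourhoods of `∞` within a set `S ⊆ ℂ`:
`|w| → ∞` with `w ∈ S`. -/
def atInftyWithin (S : Set ℂ) : Filter ℂ :=
  Filter.comap (fun w : ℂ => ‖w‖) Filter.atTop ⊓ Filter.principal S

/-- `σ` solves `σ' = 1/φ` on the right half-plane with `σ 1 = 0`. -/
def IsSigmaFunction (φ σ : ℂ → ℂ) : Prop :=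
  (∀ w ∈ rightHalfPlane, HasDerivAt σ (1 / φ w) w) ∧ σ 1 = 0

/-!
The Koenigs function `σ` linearises the semigroup, `σ (Φ t w) = σ w + t`, so
`σ (Φ t w) - σ (Φ t 1) = σ w` for all `t`. Integrating `σ' = 1/φ` along the segment from `Φ t 1`
to `Φ t w` turns this into `σ w = h t * J t`, where `h t = Φ t w - Φ t 1` and `J t` is the mean of
`1/φ` over that segment. Both trajectories grow like `β t`, because their velocity `φ (Φ t ·)`
tends to `β`; so the whole segment, divided by `t`, tends to `β` uniformly, and the expansion
`z (1/φ z - 1/β) → -γ/β²` gives `t (J t - 1/β) → -γ/β³`. Solving `σ w = h t * J t` for `h t`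
then yields `t (h t - β σ w) → γ σ w / β`.
-/

lemma tendsto_atInftyWithin_iff {α : Type*} {l : Filter α} {S : Set ℂ} {f : α → ℂ} :
    Tendsto f l (atInftyWithin S) ↔
      Tendsto (fun x => ‖f x‖) l atTop ∧ ∀ᶠ x in l, f x ∈ S := by
  rw [atInftyWithin, tendsto_inf, tendsto_comap_iff, tendsto_principal]
  rfl

lemma tendsto_norm_atInftyWithin (S : Set ℂ) :
    Tendsto (fun z : ℂ => ‖z‖) (atInftyWithin S) atTop :=
  (tendsto_atInftyWithin_iff.1 tendsto_id).1

lemma eventually_ne_zero_atInftyWithin (S : Set ℂ) : ∀ᶠ z in atInftyWithin S, z ≠ 0 :=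
  ((tendsto_norm_atInftyWithin S).eventually_gt_atTop 0).mono fun _ hz => norm_pos_iff.1 hz

lemma tendsto_inv_atInftyWithin (S : Set ℂ) :
    Tendsto (fun z : ℂ => z⁻¹) (atInftyWithin S) (𝓝 0) := by
  rw [tendsto_zero_iff_norm_tendsto_zero]
  simp only [norm_inv]
  exact (tendsto_norm_atInftyWithin S).inv_tendsto_atTop

lemma tendsto_mul_sub_of_tendsto_mul_sub_sub_div {S : Set ℂ} {f : ℂ → ℂ} {β γ : ℂ}
    (hf : Tendsto (fun z => z * (f z - β - γ / (z + 1))) (atInftyWithin S) (𝓝 0)) :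
    Tendsto (fun z => z * (f z - β)) (atInftyWithin S) (𝓝 γ) := by
  have hfrac : Tendsto (fun z : ℂ => (1 + z⁻¹)⁻¹) (atInftyWithin S) (𝓝 1) := by
    simpa using ((tendsto_inv_atInftyWithin S).const_add 1).inv₀ (by norm_num)
  have hsum := hf.add (hfrac.const_mul γ)
  rw [zero_add, mul_one] at hsum
  refine hsum.congr' ?_
  filter_upwards [eventually_ne_zero_atInftyWithin S] with z hz
  rw [show (1 + z⁻¹)⁻¹ = z / (z + 1) by field_simp]
  ring

lemma tendsto_of_tendsto_mul_sub {S : Set ℂ} {f : ℂ → ℂ} {β γ : ℂ}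
    (hf : Tendsto (fun z => z * (f z - β)) (atInftyWithin S) (𝓝 γ)) :
    Tendsto f (atInftyWithin S) (𝓝 β) := by
  have hprod := (tendsto_inv_atInftyWithin S).mul hf
  rw [zero_mul] at hprod
  rw [← tendsto_sub_nhds_zero_iff]
  refine hprod.congr' ?_
  filter_upwards [eventually_ne_zero_atInftyWithin S] with z hz
  rw [inv_mul_cancel_left₀ hz]

lemma tendsto_mul_one_div_sub_one_div {S : Set ℂ} {f : ℂ → ℂ} {β γ : ℂ} (hβ : β ≠ 0)
    (hf : Tendsto (fun z => z * (f z - β)) (atInftyWithin S) (𝓝 γ)) :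
    Tendsto (fun z => z * (1 / f z - 1 / β)) (atInftyWithin S) (𝓝 (-γ / β ^ 2)) := by
  have hlim := tendsto_of_tendsto_mul_sub hf
  have hquot := hf.neg.div (hlim.mul_const β) (mul_ne_zero hβ hβ)
  rw [← sq] at hquot
  refine hquot.congr' ?_
  filter_upwards [hlim.eventually_ne hβ] with z hz
  simp only [Pi.div_apply]
  field_simp
  ring

lemma tendsto_div_self_of_hasDerivAt {x d : ℝ → ℂ} {β : ℂ}
    (hx : ∀ᶠ t in atTop, HasDerivAt x (d t) t) (hd : Tendsto d atTop (𝓝 β)) :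
    Tendsto (fun t : ℝ => x t / t) atTop (𝓝 β) := by
  set g : ℝ → ℂ := fun t => x t - t * β
  suffices hg : g =o[atTop] (fun t : ℝ => (t : ℂ)) by
    rw [← add_zero β]
    refine (hg.tendsto_div_nhds_zero.const_add β).congr' ?_
    filter_upwards [eventually_ne_atTop 0] with t ht
    have : (t : ℂ) ≠ 0 := by exact_mod_cast ht
    simp only [g]
    field_simp
    ring
  refine Asymptotics.isLittleO_iff.2 fun c hc => ?_
  obtain ⟨T, hT⟩ := eventually_atTop.1 <|
    hx.and (Metric.tendsto_nhds.1 hd (c / 2) (half_pos hc))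
  set T₀ := max T 0
  have hderiv : ∀ t ∈ Ici T₀, HasDerivWithinAt g (d t - β) (Ici T₀) t := by
    intro t ht
    have hlin : HasDerivAt (fun s : ℝ => (s : ℂ) * β) β t := by
      simpa using (hasDerivAt_id t).ofReal_comp.mul_const β
    exact ((hT t (le_of_max_le_left ht)).1.sub hlin).hasDerivWithinAt
  have hbound : ∀ t ∈ Ici T₀, ‖d t - β‖ ≤ c / 2 := fun t ht =>
    dist_eq_norm (d t) β ▸ (hT t (le_of_max_le_left ht)).2.le
  filter_upwards [eventually_ge_atTop T₀, eventually_ge_atTop (2 * ‖g T₀‖ / c)] with t hT₀ hgT₀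
  have hmvt := (convex_Ici T₀).norm_image_sub_le_of_norm_hasDerivWithin_le hderiv hbound
    self_mem_Ici hT₀
  have hT₀_nonneg : 0 ≤ T₀ := le_max_right T 0
  rw [Real.norm_of_nonneg (sub_nonneg.2 hT₀)] at hmvt
  rw [Complex.norm_real, Real.norm_of_nonneg (hT₀_nonneg.trans hT₀)]
  rw [div_le_iff₀ hc] at hgT₀
  calc ‖g t‖ ≤ ‖g T₀‖ + ‖g t - g T₀‖ := norm_le_insert' _ _
    _ ≤ c * t := by nlinarith

namespace IsContinuousSemigroupOnHalfPlane

variable {Φ : ℝ → ℂ → ℂ} {φ : ℂ → ℂ} {w : ℂ}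

lemma tendsto_atInftyWithin (hsg : IsContinuousSemigroupOnHalfPlane Φ φ)
    (hdw : HasDWPointInfty Φ) (hw : w ∈ rightHalfPlane) :
    Tendsto (fun t => Φ t w) atTop (atInftyWithin rightHalfPlane) :=
  tendsto_atInftyWithin_iff.2
    ⟨hdw w hw, eventually_atTop.2 ⟨0, fun t ht => hsg.mapsTo t ht hw⟩⟩

lemma hasDerivAt (hsg : IsContinuousSemigroupOnHalfPlane Φ φ) (hw : w ∈ rightHalfPlane)
    {t : ℝ} (ht : 0 < t) : HasDerivAt (fun s => Φ s w) (φ (Φ t w)) t :=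
  (hsg.ode w hw t ht.le).hasDerivAt (Ici_mem_nhds ht)

lemma tendsto_div_self (hsg : IsContinuousSemigroupOnHalfPlane Φ φ)
    (hdw : HasDWPointInfty Φ) {β : ℂ} (hφ : Tendsto φ (atInftyWithin rightHalfPlane) (𝓝 β))
    (hw : w ∈ rightHalfPlane) :
    Tendsto (fun t : ℝ => Φ t w / t) atTop (𝓝 β) :=
  tendsto_div_self_of_hasDerivAt
    ((eventually_gt_atTop 0).mono fun _ ht => hsg.hasDerivAt hw ht)
    (hφ.comp (hsg.tendsto_atInftyWithin hdw hw))

end IsContinuousSemigroupOnHalfPlane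

lemma IsSigmaFunction.apply_semigroup {Φ : ℝ → ℂ → ℂ} {φ σ : ℂ → ℂ}
    (hσ : IsSigmaFunction φ σ) (hsg : IsContinuousSemigroupOnHalfPlane Φ φ)
    (hnz : ∀ w ∈ rightHalfPlane, φ w ≠ 0) {w : ℂ} (hw : w ∈ rightHalfPlane)
    {t : ℝ} (ht : 0 ≤ t) : σ (Φ t w) = σ w + t := by
  have hderiv : ∀ s ∈ Ici (0 : ℝ),
      HasDerivWithinAt (fun s => σ (Φ s w) - s) 0 (Ici 0) s := by
    intro s hs
    have hmem := hsg.mapsTo s hs hw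
    have hcomp := (hσ.1 _ hmem).comp_hasDerivWithinAt s (hsg.ode w hw s hs)
    rw [one_div, inv_mul_cancel₀ (hnz _ hmem)] at hcomp
    have hsub := hcomp.sub (hasDerivAt_id s).ofReal_comp.hasDerivWithinAt
    rwa [ofReal_one, sub_self] at hsub
  have hconst := constant_of_has_deriv_right_zero
    (fun s hs => (hderiv s hs.1).continuousWithinAt.mono Icc_subset_Ici_self)
    (fun s hs => (hderiv s hs.1).mono (Ici_subset_Ici.2 hs.1)) t ⟨ht, le_rfl⟩
  rw [hsg.init w hw] at hconst
  simpa [sub_eq_iff_eq_add] using hconst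

lemma convex_rightHalfPlane : Convex ℝ rightHalfPlane := convex_halfSpace_re_gt 0

section Segment

variable {u v : ℝ → ℂ} {β : ℂ}

lemma tendsto_segment_div (hu : Tendsto (fun t : ℝ => u t / t) atTop (𝓝 β))
    (hv : Tendsto (fun t : ℝ => v t / t) atTop (𝓝 β)) :
    Tendsto (fun p : ℝ × ℝ => (v p.1 + p.2 • (u p.1 - v p.1)) / p.1)
      (atTop ×ˢ 𝓟 (Icc 0 1)) (𝓝 β) := by
  have hdiff : Tendsto (fun p : ℝ × ℝ => u p.1 / p.1 - v p.1 / p.1)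
      (atTop ×ˢ 𝓟 (Icc 0 1)) (𝓝 0) := by
    have hsub := hu.sub hv
    rw [sub_self] at hsub
    exact hsub.comp tendsto_fst
  have hbdd : IsBoundedUnder (· ≤ ·) (atTop ×ˢ 𝓟 (Icc 0 1))
      ((‖·‖) ∘ fun p : ℝ × ℝ => (p.2 : ℂ)) :=
    isBoundedUnder_of_eventually_le (a := 1) <| eventually_prod_principal_iff.2 <|
      Eventually.of_forall fun _ s hs => by
        simpa [abs_of_nonneg hs.1] using hs.2
  have hsum := (hv.comp tendsto_fst).add (hdiff.zero_mul_isBoundedUnder_le hbdd)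
  rw [add_zero] at hsum
  refine hsum.congr fun p => ?_
  simp only [Function.comp_apply, Complex.real_smul]
  ring

lemma tendsto_segment_atInftyWithin {S : Set ℂ} (hS : Convex ℝ S) (hβ : β ≠ 0)
    (hu : Tendsto (fun t : ℝ => u t / t) atTop (𝓝 β))
    (hv : Tendsto (fun t : ℝ => v t / t) atTop (𝓝 β))
    (huS : ∀ᶠ t in atTop, u t ∈ S) (hvS : ∀ᶠ t in atTop, v t ∈ S) :
    Tendsto (fun p : ℝ × ℝ => v p.1 + p.2 • (u p.1 - v p.1))
      (atTop ×ˢ 𝓟 (Icc 0 1)) (atInftyWithin S) := by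
  refine tendsto_atInftyWithin_iff.2 ⟨?_, ?_⟩
  · refine (tendsto_fst.atTop_mul_pos (norm_pos_iff.2 hβ)
      (tendsto_segment_div hu hv).norm).congr' ?_
    filter_upwards [tendsto_fst.eventually (eventually_gt_atTop 0)] with p hp
    rw [norm_div, Complex.norm_real, Real.norm_of_nonneg hp.le, mul_div_cancel₀ _ hp.ne']
  · exact eventually_prod_principal_iff.2 <| (huS.and hvS).mono fun _ ht _ hs =>
      hS.add_smul_sub_mem ht.2 ht.1 hs

end Segment

lemma continuousOn_comp_segment {S : Set ℂ} (hS : Convex ℝ S) {f : ℂ → ℂ}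
    (hf : ContinuousOn f S) {a b : ℂ} (ha : a ∈ S) (hb : b ∈ S) :
    ContinuousOn (fun s : ℝ => f (a + s • (b - a))) (Icc 0 1) :=
  hf.comp (by fun_prop) fun _ hs => hS.add_smul_sub_mem ha hb hs

lemma tendsto_mul_integral_segment_sub {S : Set ℂ} (hS : Convex ℝ S) {f : ℂ → ℂ}
    (hf : ContinuousOn f S) {c L β : ℂ} (hβ : β ≠ 0)
    (hfL : Tendsto (fun z => z * (f z - c)) (atInftyWithin S) (𝓝 L)) {u v : ℝ → ℂ}
    (hu : Tendsto (fun t : ℝ => u t / t) atTop (𝓝 β))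
    (hv : Tendsto (fun t : ℝ => v t / t) atTop (𝓝 β))
    (huS : ∀ᶠ t in atTop, u t ∈ S) (hvS : ∀ᶠ t in atTop, v t ∈ S) :
    Tendsto (fun t : ℝ => t * ((∫ s in (0 : ℝ)..1, f (v t + s • (u t - v t))) - c)) atTop
      (𝓝 (L / β)) := by
  set F : ℝ → ℝ → ℂ := fun t s => t * (f (v t + s • (u t - v t)) - c)
  have hζ := tendsto_segment_atInftyWithin hS hβ hu hv huS hvS
  have hF : Tendsto ↿F (atTop ×ˢ 𝓟 (uIcc 0 1)) (𝓝 (L / β)) := by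
    rw [uIcc_of_le zero_le_one, div_eq_inv_mul]
    refine ((tendsto_segment_div hu hv).inv₀ hβ |>.mul (hfL.comp hζ)).congr' ?_
    filter_upwards [hζ.eventually (eventually_ne_zero_atInftyWithin S),
      tendsto_fst.eventually (eventually_ne_atTop 0)] with p hζp hp
    have : (p.1 : ℂ) ≠ 0 := by exact_mod_cast hp
    simp only [Function.comp_apply, Function.HasUncurry.uncurry, F, id] at hζp ⊢
    field_simp
  have hcont : ∀ᶠ t in atTop, ContinuousOn (fun s : ℝ => f (v t + s • (u t - v t))) (Icc 0 1) :=
    (huS.and hvS).mono fun t ht => continuousOn_comp_segment hS hf ht.2 ht.1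
  have hint := (tendsto_prod_principal_iff.1 hF).tendsto_intervalIntegral_of_continuousOn
    (μ := volume) (hcont.mono fun t ht => by
      rw [uIcc_of_le zero_le_one]
      exact continuousOn_const.mul (ht.sub continuousOn_const))
  rw [intervalIntegral.integral_const, sub_zero, one_smul] at hint
  refine hint.congr' ?_
  filter_upwards [hcont] with t ht
  rw [intervalIntegral.integral_const_mul, intervalIntegral.integral_sub
    (ht.intervalIntegrable_of_Icc zero_le_one) intervalIntegrable_const,
    intervalIntegral.integral_const, sub_zero, one_smul]

lemma IsSigmaFunction.sub_eq_mul_integral {φ σ : ℂ → ℂ} (hσ : IsSigmaFunction φ σ)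
    (hcont : ContinuousOn (fun z => 1 / φ z) rightHalfPlane) {a b : ℂ}
    (ha : a ∈ rightHalfPlane) (hb : b ∈ rightHalfPlane) :
    σ b - σ a = (b - a) * ∫ s in (0 : ℝ)..1, 1 / φ (a + s • (b - a)) := by
  have hftc := intervalIntegral.integral_unitInterval_deriv_eq_sub (f := σ)
    (f' := fun z => 1 / φ z) (z₀ := a) (z₁ := b - a)
    (continuousOn_comp_segment convex_rightHalfPlane hcont ha hb)
    fun s hs => hσ.1 _ (convex_rightHalfPlane.add_smul_sub_mem ha hb hs)
  rwa [add_sub_cancel, smul_eq_mul, eq_comm] at hftc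

lemma tendsto_mul_sub_of_mul_eq {h J : ℝ → ℂ} {β a c : ℂ} (hβ : β ≠ 0)
    (hJ : Tendsto (fun t : ℝ => t * (J t - 1 / β)) atTop (𝓝 c))
    (hhJ : ∀ᶠ t in atTop, h t * J t = a) :
    Tendsto (fun t : ℝ => t * (h t - β * a)) atTop (𝓝 (-β ^ 2 * a * c)) := by
  have hJlim : Tendsto J atTop (𝓝 (1 / β)) := by
    have hprod := tendsto_inv_atTop_zero.ofReal.mul hJ
    rw [ofReal_zero, zero_mul] at hprod
    rw [← tendsto_sub_nhds_zero_iff]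
    refine hprod.congr' ?_
    filter_upwards [eventually_ne_atTop 0] with t ht
    rw [ofReal_inv, inv_mul_cancel_left₀ (ofReal_ne_zero.2 ht)]
  have hquot := (hJ.const_mul (-β * a)).div hJlim (one_div_ne_zero hβ)
  rw [show -β * a * c / (1 / β) = -β ^ 2 * a * c by field_simp] at hquot
  refine hquot.congr' ?_
  filter_upwards [hhJ, hJlim.eventually_ne (one_div_ne_zero hβ)] with t hJt hJ0
  rw [← hJt, Pi.div_apply]
  field_simp
  ring

theorem stmt15 (Φ : ℝ → ℂ → ℂ) (φ σ : ℂ → ℂ) (β γ : ℂ)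
    (hsg : IsContinuousSemigroupOnHalfPlane Φ φ)
    (hdw : HasDWPointInfty Φ)
    (hnz : ∀ w ∈ rightHalfPlane, φ w ≠ 0)
    (hβ : β ≠ 0)
    (hrep : Tendsto (fun w : ℂ => w * (φ w - β - γ / (w + 1)))
      (atInftyWithin rightHalfPlane) (𝓝 0))
    (hσ : IsSigmaFunction φ σ) :
    ∀ w ∈ rightHalfPlane,
      Tendsto (fun t : ℝ => (t : ℂ) * (Φ t w - Φ t 1 - β * σ w)) atTop
        (𝓝 (γ * σ w / β)) := by
  intro w hw
  have h1 : (1 : ℂ) ∈ rightHalfPlane := by simp [rightHalfPlane]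
  have hmem : ∀ z ∈ rightHalfPlane, ∀ᶠ t in atTop, Φ t z ∈ rightHalfPlane := fun z hz =>
    eventually_atTop.2 ⟨0, fun t ht => hsg.mapsTo t ht hz⟩
  have hexp := tendsto_mul_sub_of_tendsto_mul_sub_sub_div hrep
  have hφ := tendsto_of_tendsto_mul_sub hexp
  have hcont : ContinuousOn (fun z => 1 / φ z) rightHalfPlane :=
    continuousOn_const.div hsg.gen_holomorphic.continuousOn hnz
  have hJ := tendsto_mul_integral_segment_sub convex_rightHalfPlane hcont hβ
    (tendsto_mul_one_div_sub_one_div hβ hexp) (hsg.tendsto_div_self hdw hφ hw)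
    (hsg.tendsto_div_self hdw hφ h1) (hmem w hw) (hmem 1 h1)
  have hid : ∀ᶠ t in atTop, (Φ t w - Φ t 1) *
      (∫ s in (0 : ℝ)..1, 1 / φ (Φ t 1 + s • (Φ t w - Φ t 1))) = σ w := by
    filter_upwards [eventually_ge_atTop 0] with t ht
    rw [← hσ.sub_eq_mul_integral hcont (hsg.mapsTo t ht h1) (hsg.mapsTo t ht hw),
      hσ.apply_semigroup hsg hnz hw ht, hσ.apply_semigroup hsg hnz h1 ht, hσ.2]
    ring
  convert tendsto_mul_sub_of_mul_eq hβ hJ hid using 2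
  field_simp
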